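/- arXiv:1610.07500 — 3 statements merged into one kernel-verified Lean document; each statement's English description precedes it below -/
import Mathlib

section
/- Let K ⊆ ℕ and let K[·] be an approximation of K (K[s] ⊆ K[s+1] for all s and K = ⋃_s K[s]). Define the coloring c : ℕ → Fin 2 by c(n) = VSG(n) mod 2. Suppose H is an infinite apart set of positive integers and a, b are positive integers such that FS^{{a, b, a+b, a+2b}}(H) is monochromatic under c. Then for every m ∈ FS^{=a}(H) ∪ FS^{=b}(H) ∪ FS^{=a+b}(H), the number SG(m) of short gaps of m is even. -/
/-- `lam n` is the least exponent in the binary expansion of `n`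
(the 2-adic valuation of `n`). -/
def lam (n : ℕ) : ℕ := padicValNat 2 n

/-- `mu n` is the greatest exponent in the binary expansion of `n`. -/
def mu (n : ℕ) : ℕ := Nat.log 2 n

/-- A set `X` of positive integers is apart if for all `x < x'` in `X`,
`μ(x) < λ(x')`. -/
def ApartSet (X : Set ℕ) : Prop :=
  (∀ x ∈ X, 0 < x) ∧ ∀ x ∈ X, ∀ y ∈ X, x < y → mu x < lam y

/-- `FSeq j B` is the set of sums of `j` distinct elements of `B`. -/
def FSeq (j : ℕ) (B : Set ℕ) : Set ℕ :=
  {n | ∃ F : Finset ℕ, ↑F ⊆ B ∧ F.card = j ∧ ∑ x ∈ F, x = n}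

/-- `FSin A B = ⋃ j ∈ A, FSeq j B`. -/
def FSin (A B : Set ℕ) : Set ℕ := ⋃ j ∈ A, FSeq j B

/-- A set is monochromatic under a coloring `c` if `c` is constant on it. -/
def MonoChr {r : ℕ} (c : ℕ → Fin r) (S : Set ℕ) : Prop :=
  ∀ x ∈ S, ∀ y ∈ S, c x = c y

/-- The gaps of `n`: pairs of consecutive exponents in the binary expansion. -/
def gaps (n : ℕ) : Set (ℕ × ℕ) :=
  {p | n.testBit p.1 ∧ n.testBit p.2 ∧ p.1 < p.2 ∧
    ∀ t, p.1 < t → t < p.2 → ¬ n.testBit t}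

/-- The gap `p` of `n` is short in `n` (w.r.t. `K` and approximation `Kapp`). -/
def ShortGap (K : Set ℕ) (Kapp : ℕ → Set ℕ) (n : ℕ) (p : ℕ × ℕ) : Prop :=
  p ∈ gaps n ∧ ∃ x ≤ p.1, x ∈ K ∧ x ∉ Kapp p.2

/-- The gap `p` of `n` is very short in `n` (w.r.t. approximation `Kapp`). -/
def VeryShortGap (Kapp : ℕ → Set ℕ) (n : ℕ) (p : ℕ × ℕ) : Prop :=
  p ∈ gaps n ∧ ∃ x ≤ p.1, x ∈ Kapp (mu n) ∧ x ∉ Kapp p.2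

/-- `SG K Kapp n` is the number of short gaps of `n`. -/
noncomputable def SG (K : Set ℕ) (Kapp : ℕ → Set ℕ) (n : ℕ) : ℕ :=
  {p : ℕ × ℕ | ShortGap K Kapp n p}.ncard

/-- `VSG Kapp n` is the number of very short gaps of `n`. -/
noncomputable def VSG (Kapp : ℕ → Set ℕ) (n : ℕ) : ℕ :=
  {p : ℕ × ℕ | VeryShortGap Kapp n p}.ncard

/-!
If every bit of `m` lies below every bit of `q`, the gaps of `m + q` are those of `m`, those of
`q`, and the bridging gap `(μ m, λ q)`. Once `λ q` is so large that `K ∩ [0, μ m]` is already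
enumerated by `K[λ q]`, the bridging gap is not very short and a gap of `m` is very short in
`m + q` exactly when it is short in `m`; hence `VSG (m + q) = SG m + VSG q`. For
`m ∈ FS^{=i}(H)`, an infinite apart `H` supplies such a `q ∈ FS^{=j}(H)` built from elements not
used by `m`, so `m + q ∈ FS^{=i+j}(H)`. With `(i, j)` one of `(a, b)`, `(b, a)`, `(a + b, b)`, both
`j` and `i + j` lie in `{a, b, a + b, a + 2b}`, and `c q = c (m + q)` says that `SG m` is even.
-/

lemma testBit_le_mu {n t : ℕ} (h : n.testBit t) : t ≤ mu n :=
  Nat.le_log_of_pow_le one_lt_two (Nat.ge_two_pow_of_testBit h)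

lemma testBit_mu {n : ℕ} (hn : n ≠ 0) : n.testBit (mu n) := by
  rw [mu, ← Nat.log2_eq_log_two]
  exact Nat.testBit_log2 hn

lemma lam_le_of_testBit {n t : ℕ} (h : n.testBit t) : lam n ≤ t := by
  obtain ⟨k, hk⟩ : 2 ^ lam n ∣ n := pow_padicValNat_dvd
  rw [hk, Nat.testBit_two_pow_mul, Bool.and_eq_true, decide_eq_true_iff] at h
  exact h.1

lemma testBit_lam {n : ℕ} (hn : n ≠ 0) : n.testBit (lam n) := by
  obtain ⟨k, hk⟩ : 2 ^ lam n ∣ n := pow_padicValNat_dvd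
  have hodd : k % 2 = 1 := by
    rw [← Nat.two_dvd_ne_zero]
    rintro ⟨l, rfl⟩
    exact pow_succ_padicValNat_not_dvd (p := 2) hn
      (show 2 ^ (lam n + 1) ∣ n from ⟨l, hk.trans (by ring)⟩)
  nth_rw 1 [hk]
  simp [Nat.testBit_two_pow_mul, Nat.testBit_zero, hodd]

lemma testBit_add_of_mu_lt_lam {m q : ℕ} (h : mu m < lam q) (t : ℕ) :
    (m + q).testBit t = (m.testBit t || q.testBit t) := by
  have hm : m < 2 ^ lam q := Nat.lt_pow_of_log_lt one_lt_two h
  obtain ⟨k, hk⟩ : 2 ^ lam q ∣ q := pow_padicValNat_dvd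
  rw [hk, add_comm, Nat.testBit_two_pow_mul_add _ hm, Nat.testBit_two_pow_mul]
  by_cases ht : t < lam q
  · simp [ht]
  · have hle : lam q ≤ t := not_lt.1 ht
    simp [ht, hle, Nat.testBit_lt_two_pow (hm.trans_le (Nat.pow_le_pow_right two_pos hle))]

lemma mu_add_of_mu_lt_lam {m q : ℕ} (hq : q ≠ 0) (h : mu m < lam q) : mu (m + q) = mu q := by
  have hbit := testBit_add_of_mu_lt_lam h
  apply le_antisymm
  · have htop := testBit_mu (n := m + q) (by omega)
    rw [hbit, Bool.or_eq_true] at htop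
    rcases htop with hm | hq'
    · exact (testBit_le_mu hm).trans (h.le.trans (testBit_le_mu (testBit_lam hq)))
    · exact testBit_le_mu hq'
  · exact testBit_le_mu (by simp [hbit, testBit_mu hq])

lemma gaps_add_of_mu_lt_lam {m q : ℕ} (hm : m ≠ 0) (hq : q ≠ 0) (h : mu m < lam q) :
    gaps (m + q) = insert (mu m, lam q) (gaps m ∪ gaps q) := by
  have hbit := testBit_add_of_mu_lt_lam h
  have hmu := testBit_mu hm
  have hlam := testBit_lam hq
  have hm_le : ∀ t, m.testBit t → t ≤ mu m := fun _ => testBit_le_mu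
  have hq_ge : ∀ t, q.testBit t → lam q ≤ t := fun _ => lam_le_of_testBit
  ext ⟨u, v⟩
  simp only [gaps, Set.mem_insert_iff, Set.mem_union, Set.mem_ofPred_eq, Prod.mk.injEq, hbit,
    Bool.or_eq_true]
  grind

lemma gaps_finite (n : ℕ) : (gaps n).Finite :=
  ((Set.finite_Iic (mu n)).prod (Set.finite_Iic (mu n))).subset
    fun _ hp => ⟨testBit_le_mu hp.1, testBit_le_mu hp.2.1⟩

lemma snd_le_mu_of_mem_gaps {n : ℕ} {p : ℕ × ℕ} (hp : p ∈ gaps n) : p.2 ≤ mu n :=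
  testBit_le_mu hp.2.1

lemma lam_le_fst_of_mem_gaps {n : ℕ} {p : ℕ × ℕ} (hp : p ∈ gaps n) : lam n ≤ p.1 :=
  lam_le_of_testBit hp.1

section Gaps

variable {K : Set ℕ} {Kapp : ℕ → Set ℕ} {m q : ℕ}

lemma veryShortGaps_add (hsub : ∀ s, Kapp s ⊆ K) (hmono : Monotone Kapp)
    (hm : m ≠ 0) (hq : q ≠ 0) (h : mu m < lam q)
    (hstage : ∀ x ≤ mu m, x ∈ K → x ∈ Kapp (lam q)) :
    {p | VeryShortGap Kapp (m + q) p} =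
      {p | ShortGap K Kapp m p} ∪ {p | VeryShortGap Kapp q p} := by
  have hmu : mu (m + q) = mu q := mu_add_of_mu_lt_lam hq h
  have hlam_mu : lam q ≤ mu q := testBit_le_mu (testBit_lam hq)
  ext p
  simp only [VeryShortGap, ShortGap, Set.mem_ofPred_eq, Set.mem_union, hmu,
    gaps_add_of_mu_lt_lam hm hq h, Set.mem_insert_iff]
  constructor
  · rintro ⟨rfl | hpm | hpq, x, hxp, hxK, hx⟩
    · exact absurd (hstage x hxp (hsub _ hxK)) hx
    · exact Or.inl ⟨hpm, x, hxp, hsub _ hxK, hx⟩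
    · exact Or.inr ⟨hpq, x, hxp, hxK, hx⟩
  · rintro (⟨hpm, x, hxp, hxK, hx⟩ | ⟨hpq, hx⟩)
    · have hxm : x ≤ mu m :=
        hxp.trans (hpm.2.2.1.le.trans (snd_le_mu_of_mem_gaps hpm))
      exact ⟨Or.inr (Or.inl hpm), x, hxp, hmono hlam_mu (hstage x hxm hxK), hx⟩
    · exact ⟨Or.inr (Or.inr hpq), hx⟩

lemma vsg_add (hsub : ∀ s, Kapp s ⊆ K) (hmono : Monotone Kapp)
    (hm : m ≠ 0) (hq : q ≠ 0) (h : mu m < lam q)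
    (hstage : ∀ x ≤ mu m, x ∈ K → x ∈ Kapp (lam q)) :
    VSG Kapp (m + q) = SG K Kapp m + VSG Kapp q := by
  have hdisj : Disjoint {p | ShortGap K Kapp m p} {p | VeryShortGap Kapp q p} :=
    Set.disjoint_left.2 fun p hpm hpq => by
      have := snd_le_mu_of_mem_gaps hpm.1
      have := lam_le_fst_of_mem_gaps hpq.1
      have := hpq.1.2.2.1
      omega
  rw [VSG, veryShortGaps_add hsub hmono hm hq h hstage,
    Set.ncard_union_eq hdisj ((gaps_finite m).subset fun _ hp => hp.1)
      ((gaps_finite q).subset fun _ hp => hp.1), SG, VSG]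

end Gaps

lemma exists_stage {K : Set ℕ} {Kapp : ℕ → Set ℕ} (hmono : Monotone Kapp)
    (hK : K ⊆ ⋃ s, Kapp s) (M : ℕ) : ∃ s, ∀ x ≤ M, x ∈ K → x ∈ Kapp s := by
  classical
  obtain ⟨s, hs⟩ := hmono.directed_le.exists_mem_subset_of_finset_subset_biUnion
    (s := {x ∈ Finset.Iic M | x ∈ K}) fun x hx => hK (Finset.mem_filter.1 hx).2
  exact ⟨s, fun x hxM hxK => hs (by simp [hxM, hxK])⟩

namespace ApartSet

variable {H : Set ℕ}

lemma pos_of_mem_FSeq (hap : ApartSet H) {j n : ℕ} (hj : 0 < j) (hn : n ∈ FSeq j H) :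
    0 < n := by
  obtain ⟨F, hFH, rfl, rfl⟩ := hn
  exact Finset.sum_pos (fun x hx => hap.1 x (hFH hx)) (Finset.card_pos.1 hj)

lemma exists_forall_lt_le_lam (hap : ApartSet H) (hinf : H.Infinite) (N : ℕ) :
    ∃ T, ∀ y ∈ H, T < y → N ≤ lam y := by
  obtain ⟨x, hxH, hx⟩ := hinf.exists_gt (2 ^ N)
  exact ⟨x, fun y hyH hxy =>
    (Nat.le_log_of_pow_le one_lt_two hx.le).trans (hap.2 x hxH y hyH hxy).le⟩

lemma exists_finset_disjoint_le_lam (hap : ApartSet H) (hinf : H.Infinite) (F : Finset ℕ)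
    (j N : ℕ) : ∃ G : Finset ℕ, ↑G ⊆ H ∧ G.card = j ∧ Disjoint F G ∧ ∀ g ∈ G, N ≤ lam g := by
  obtain ⟨T, hT⟩ := hap.exists_forall_lt_le_lam hinf N
  obtain ⟨G, hG, hGj⟩ :=
    (hinf.sdiff ((Set.finite_Iic T).union F.finite_toSet)).exists_subset_card_eq j
  refine ⟨G, fun g hg => (hG hg).1, hGj, Finset.disjoint_right.2 fun g hg hgF => ?_,
    fun g hg => hT g (hG hg).1 ?_⟩
  · exact (hG hg).2 (Or.inr hgF)
  · exact not_le.1 fun hgT => (hG hg).2 (Or.inl hgT)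

end ApartSet

lemma le_lam_sum {G : Finset ℕ} {N : ℕ} (h : ∀ g ∈ G, N ≤ lam g) (hsum : ∑ g ∈ G, g ≠ 0) :
    N ≤ lam (∑ g ∈ G, g) :=
  (padicValNat_dvd_iff_le hsum).1 <|
    Finset.dvd_sum fun g hg => (pow_dvd_pow 2 (h g hg)).trans pow_padicValNat_dvd

lemma add_mem_FSeq {H : Set ℕ} {F G : Finset ℕ} (hFH : ↑F ⊆ H) (hGH : ↑G ⊆ H)
    (hFG : Disjoint F G) :
    ∑ x ∈ F, x + ∑ x ∈ G, x ∈ FSeq (F.card + G.card) H :=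
  ⟨F ∪ G, by simpa using And.intro hFH hGH, Finset.card_union_of_disjoint hFG,
    Finset.sum_union hFG⟩

open Fin.NatCast

theorem even_sg_of_monoChr {K : Set ℕ} {Kapp : ℕ → Set ℕ} (hmono : Monotone Kapp)
    (hK : K = ⋃ s, Kapp s) {H : Set ℕ} (hinf : H.Infinite) (hap : ApartSet H) {A : Set ℕ}
    (hmc : MonoChr (fun n => (VSG Kapp n : Fin 2)) (FSin A H)) {i j : ℕ} (hi : 0 < i)
    (hj : 0 < j) (hjA : j ∈ A) (hijA : i + j ∈ A) {m : ℕ} (hm : m ∈ FSeq i H) :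
    Even (SG K Kapp m) := by
  have hm0 : m ≠ 0 := (hap.pos_of_mem_FSeq hi hm).ne'
  obtain ⟨F, hFH, rfl, rfl⟩ := hm
  set m := ∑ x ∈ F, x
  obtain ⟨s, hs⟩ := exists_stage hmono hK.subset (mu m)
  obtain ⟨G, hGH, rfl, hFG, hGlam⟩ :=
    hap.exists_finset_disjoint_le_lam hinf F j (max s (mu m + 1))
  set q := ∑ x ∈ G, x
  have hq : q ∈ FSeq G.card H := ⟨G, hGH, rfl, rfl⟩
  have hq0 : q ≠ 0 := (hap.pos_of_mem_FSeq hj hq).ne'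
  have hlam : max s (mu m + 1) ≤ lam q := le_lam_sum hGlam hq0
  have hadd := vsg_add (fun s => hK ▸ Set.subset_iUnion Kapp s) hmono hm0 hq0 (by omega)
    fun x hx hxK => hmono (le_of_max_le_left hlam) (hs x hx hxK)
  have hcol :=
    hmc _ (Set.mem_biUnion hjA hq) _ (Set.mem_biUnion hijA (add_mem_FSeq hFH hGH hFG))
  dsimp only at hcol
  rw [hadd, Nat.cast_add] at hcol
  exact even_iff_two_dvd.2 (Fin.natCast_eq_zero.1 (add_eq_right.1 hcol.symm))

theorem sg_even_on_solution (K : Set ℕ) (Kapp : ℕ → Set ℕ)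
    (hmono : ∀ s, Kapp s ⊆ Kapp (s + 1)) (hK : K = ⋃ s, Kapp s)
    (c : ℕ → Fin 2) (hc : ∀ n, c n = (VSG Kapp n : Fin 2))
    (H : Set ℕ) (hinf : H.Infinite) (hap : ApartSet H)
    (a b : ℕ) (ha : 0 < a) (hb : 0 < b)
    (hmc : MonoChr c (FSin {a, b, a + b, a + 2 * b} H)) :
    ∀ m ∈ FSeq a H ∪ FSeq b H ∪ FSeq (a + b) H, Even (SG K Kapp m) := by
  obtain rfl : c = fun n => (VSG Kapp n : Fin 2) := funext hc
  have key := @even_sg_of_monoChr K Kapp (monotone_nat_of_le_succ hmono) hK H hinf hap _ hmc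
  rintro m ((hm | hm) | hm)
  · exact key ha hb (by simp) (by simp) hm
  · exact key hb ha (by simp) (by simp [add_comm]) hm
  · exact key (by omega) hb (by simp)
      (by simp only [Set.mem_insert_iff, Set.mem_singleton_iff]; omega) hm
end

section
/- Let K ⊆ ℕ and let K[·] be an approximation of K (K[s] ⊆ K[s+1] for all s and K = ⋃_s K[s]). Define the coloring c : ℕ → Fin 2 by c(n) = VSG(n) mod 2. Suppose H is an infinite apart set of positive integers and a, b are positive integers such that FS^{{a, b, a+b, a+2b}}(H) is monochromatic under c. Then for all m ∈ FS^{=a}(H) and all n ∈ FS^{=b}(H) with μ(m) < λ(n), one has: for every x ≤ μ(m), x ∈ K if and only if x ∈ K[λ(n)]. -/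
lemma testBit_of_lt_lam {m i : ℕ} (h : i < lam m) : m.testBit i = false := by
  obtain ⟨q, hq⟩ : 2 ^ (i+1) ∣ m :=
    dvd_trans (pow_dvd_pow 2 h) (pow_padicValNat_dvd)
  have h2 : m = 2 ^ i * (2 * q) := by rw [hq]; ring
  have hdiv : m / 2 ^ i = 2 * q := by
    rw [h2, Nat.mul_div_cancel_left _ (Nat.two_pow_pos i)]
  rw [Nat.testBit_eq_decide_div_mod_eq, hdiv]
  simp [Nat.mul_mod_right]

lemma testBit_lam_s15 {m : ℕ} (hm : 0 < m) : m.testBit (lam m) = true := by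
  obtain ⟨q, hq⟩ : 2 ^ lam m ∣ m := pow_padicValNat_dvd
  have hnd : ¬ 2 ^ (lam m + 1) ∣ m := pow_succ_padicValNat_not_dvd hm.ne'
  have hq2 : q % 2 = 1 := by
    rcases Nat.mod_two_eq_zero_or_one q with h | h
    · exfalso; apply hnd
      obtain ⟨r, hr⟩ := (Nat.dvd_iff_mod_eq_zero).2 h
      refine ⟨r, ?_⟩
      conv_lhs => rw [hq, hr]
      ring
    · exact h
  have hdiv : m / 2 ^ lam m = q := by
    set L := lam m with hL
    rw [hq, Nat.mul_div_cancel_left _ (Nat.two_pow_pos _)]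
  rw [Nat.testBit_eq_decide_div_mod_eq, hdiv]
  simp [hq2]

lemma testBit_of_mu_lt {m i : ℕ} (h : mu m < i) : m.testBit i = false := by
  rcases Nat.eq_zero_or_pos m with rfl | hm
  · simp
  · exact Nat.testBit_lt_two_pow (lt_of_lt_of_le (Nat.lt_pow_succ_log_self one_lt_two m)
      (Nat.pow_le_pow_right two_pos h))

lemma testBit_mu_s15 {m : ℕ} (hm : 0 < m) : m.testBit (mu m) = true := by
  have h1 : 2 ^ mu m ≤ m := Nat.pow_log_le_self 2 hm.ne'
  have h2 : m < 2 ^ (mu m + 1) := Nat.lt_pow_succ_log_self one_lt_two m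
  have h3 : m / 2 ^ mu m = 1 := by
    rw [pow_succ] at h2
    exact Nat.div_eq_of_lt_le (by omega) (by omega)
  rw [Nat.testBit_eq_decide_div_mod_eq, h3]
  decide

lemma lam_le_of_testBit_s15 {m i : ℕ} (h : m.testBit i = true) : lam m ≤ i := by
  by_contra hc; rw [testBit_of_lt_lam (by omega)] at h; exact Bool.false_ne_true h

lemma le_mu_of_testBit {m i : ℕ} (h : m.testBit i = true) : i ≤ mu m := by
  by_contra hc; rw [testBit_of_mu_lt (by omega)] at h; exact Bool.false_ne_true h

lemma lam_le_mu {m : ℕ} (hm : 0 < m) : lam m ≤ mu m := le_mu_of_testBit (testBit_lam_s15 hm)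

lemma mu_lt_imp_lt {m n : ℕ} (hm : 0 < m) (hn : 0 < n) (h : mu m < mu n) : m < n := by
  by_contra hc
  have h2 : mu n ≤ mu m := Nat.log_mono_right (by omega)
  omega

lemma testBit_add_apart {m n : ℕ} (hm : 0 < m) (h : mu m < lam n) (i : ℕ) :
    (m + n).testBit i = (m.testBit i || n.testBit i) := by
  set L := lam n with hL
  obtain ⟨q, hq⟩ : 2 ^ L ∣ n := pow_padicValNat_dvd
  have hmlt : m < 2 ^ L :=
    lt_of_lt_of_le (Nat.lt_pow_succ_log_self one_lt_two m) (Nat.pow_le_pow_right two_pos h)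
  have key : (m + n).testBit i = if i < L then m.testBit i else q.testBit (i - L) := by
    have h2 : m + n = 2 ^ L * q + m := by omega
    rw [h2, Nat.testBit_two_pow_mul_add q hmlt i]
  have keyn : n.testBit i = if i < L then false else q.testBit (i - L) := by
    have h2 : n = 2 ^ L * q + 0 := by omega
    rw [h2, Nat.testBit_two_pow_mul_add q (Nat.two_pow_pos _) i]
    simp
  rcases lt_or_ge i L with hi | hi
  · simp [key, keyn, hi]
  · have : m.testBit i = false := testBit_of_mu_lt (by omega)
    simp [key, keyn, not_lt.2 hi, this]

lemma lam_eq_of {m i : ℕ} (h1 : m.testBit i = true) (h2 : ∀ j < i, m.testBit j = false) :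
    lam m = i := by
  have hle := lam_le_of_testBit_s15 h1
  rcases eq_or_lt_of_le hle with he | hlt
  · exact he
  · have hm : 0 < m := by
      rcases Nat.eq_zero_or_pos m with rfl | hm
      · simp at h1
      · exact hm
    exact absurd (h2 _ hlt) (by simp [testBit_lam_s15 hm])

lemma mu_eq_of {m i : ℕ} (h1 : m.testBit i = true) (h2 : ∀ j, i < j → m.testBit j = false) :
    mu m = i := by
  have hle := le_mu_of_testBit h1
  rcases eq_or_lt_of_le hle with he | hlt
  · exact he.symm
  · have hm : 0 < m := by
      rcases Nat.eq_zero_or_pos m with rfl | hm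
      · simp at h1
      · exact hm
    exact absurd (h2 _ hlt) (by simp [testBit_mu_s15 hm])

lemma lam_add_apart {m n : ℕ} (hm : 0 < m) (hn : 0 < n) (h : mu m < lam n) :
    lam (m + n) = lam m := by
  apply lam_eq_of
  · rw [testBit_add_apart hm h, testBit_lam_s15 hm]; simp
  · intro j hj
    rw [testBit_add_apart hm h, testBit_of_lt_lam hj,
      testBit_of_lt_lam (by have := lam_le_mu hm; omega)]
    rfl

lemma mu_add_apart {m n : ℕ} (hm : 0 < m) (hn : 0 < n) (h : mu m < lam n) :
    mu (m + n) = mu n := by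
  apply mu_eq_of
  · rw [testBit_add_apart hm h, testBit_mu_s15 hn]; simp
  · intro j hj
    rw [testBit_add_apart hm h, testBit_of_mu_lt hj,
      testBit_of_mu_lt (by have := lam_le_mu hn; omega)]
    rfl

lemma gaps_bound {n : ℕ} {p : ℕ × ℕ} (hp : p ∈ gaps n) :
    lam n ≤ p.1 ∧ p.1 < p.2 ∧ p.2 ≤ mu n :=
  ⟨lam_le_of_testBit_s15 hp.1, hp.2.2.1, le_mu_of_testBit hp.2.1⟩

lemma gaps_add_apart {m n : ℕ} (hm : 0 < m) (hn : 0 < n) (h : mu m < lam n) :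
    gaps (m + n) = gaps m ∪ gaps n ∪ {(mu m, lam n)} := by
  have hlmu := lam_le_mu hm
  have hlmun := lam_le_mu hn
  ext ⟨u, v⟩
  simp only [gaps, Set.mem_union, Set.mem_setOf_eq, Set.mem_singleton_iff, Prod.mk.injEq]
  constructor
  · rintro ⟨h1, h2, h3, h4⟩
    rw [testBit_add_apart hm h, Bool.or_eq_true] at h1 h2
    have h4' : ∀ t, u < t → t < v → ¬ (m.testBit t ∨ n.testBit t) := by
      intro t ht1 ht2 hc
      exact h4 t ht1 ht2 (by rw [testBit_add_apart hm h]; rcases hc with hc | hc <;> simp [hc])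
    rcases h1 with h1 | h1 <;> rcases h2 with h2 | h2
    · exact Or.inl (Or.inl ⟨h1, h2, h3, fun t a b hc => h4' t a b (Or.inl hc)⟩)
    · -- u from m, v from n : u = mu m, v = lam n
      right
      have hu : u ≤ mu m := le_mu_of_testBit h1
      have hv : lam n ≤ v := lam_le_of_testBit_s15 h2
      constructor
      · by_contra hc
        have hultmu : u < mu m := by omega
        exact h4' (mu m) hultmu (by omega) (Or.inl (testBit_mu_s15 hm))
      · by_contra hc
        have : lam n < v := by omega
        exact h4' (lam n) (by omega) this (Or.inr (testBit_lam_s15 hn))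
    · exfalso
      have := lam_le_of_testBit_s15 h1
      have := le_mu_of_testBit h2
      omega
    · exact Or.inl (Or.inr ⟨h1, h2, h3, fun t a b hc => h4' t a b (Or.inr hc)⟩)
  · intro hcase
    have key : ∀ i, (m + n).testBit i = (m.testBit i || n.testBit i) :=
      testBit_add_apart hm h
    rcases hcase with (⟨h1, h2, h3, h4⟩ | ⟨h1, h2, h3, h4⟩) | ⟨hu, hv⟩
    · refine ⟨by simp [key, h1], by simp [key, h2], h3, ?_⟩
      intro t ht1 ht2
      rw [key, Bool.or_eq_true]
      rintro (hc | hc)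
      · exact h4 t ht1 ht2 hc
      · have := lam_le_of_testBit_s15 hc
        have := le_mu_of_testBit h2
        omega
    · refine ⟨by simp [key, h1], by simp [key, h2], h3, ?_⟩
      intro t ht1 ht2
      rw [key, Bool.or_eq_true]
      rintro (hc | hc)
      · have := le_mu_of_testBit hc
        have := lam_le_of_testBit_s15 h1
        omega
      · exact h4 t ht1 ht2 hc
    · subst hu; subst hv
      refine ⟨by simp [key, testBit_mu_s15 hm], by simp [key, testBit_lam_s15 hn], by omega, ?_⟩
      intro t ht1 ht2
      rw [key, Bool.or_eq_true]
      rintro (hc | hc)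
      · have := le_mu_of_testBit hc; omega
      · have := lam_le_of_testBit_s15 hc; omega

def vset (Kapp : ℕ → Set ℕ) (t m : ℕ) : Set (ℕ × ℕ) :=
  {p | p ∈ gaps m ∧ ∃ x ≤ p.1, x ∈ Kapp t ∧ x ∉ Kapp p.2}

noncomputable def vcount (Kapp : ℕ → Set ℕ) (t m : ℕ) : ℕ := (vset Kapp t m).ncard

lemma vset_finite (Kapp : ℕ → Set ℕ) (t m : ℕ) : (vset Kapp t m).Finite :=
  (gaps_finite m).subset (fun p hp => hp.1)

open Classical in
lemma vcount_add (Kapp : ℕ → Set ℕ) {m n : ℕ} (hm : 0 < m) (hn : 0 < n)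
    (h : mu m < lam n) (t : ℕ) :
    vcount Kapp t (m + n) = vcount Kapp t m + vcount Kapp t n +
      (if ∃ x ≤ mu m, x ∈ Kapp t ∧ x ∉ Kapp (lam n) then 1 else 0) := by
  have hlmu := lam_le_mu hm
  have hsplit : vset Kapp t (m + n) = (vset Kapp t m ∪ vset Kapp t n) ∪
      (if ∃ x ≤ mu m, x ∈ Kapp t ∧ x ∉ Kapp (lam n) then {((mu m, lam n) : ℕ × ℕ)} else ∅) := by
    ext p
    simp only [vset, Set.mem_setOf_eq, Set.mem_union, gaps_add_apart hm hn h]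
    constructor
    · rintro ⟨(hg | hg) | hg, hx⟩
      · exact Or.inl (Or.inl ⟨hg, hx⟩)
      · exact Or.inl (Or.inr ⟨hg, hx⟩)
      · right
        simp only [Set.mem_singleton_iff] at hg
        subst hg
        rw [if_pos hx]
        rfl
    · intro hp
      split_ifs at hp with hE
      · rcases hp with (⟨hg, hx⟩ | ⟨hg, hx⟩) | hg
        · exact ⟨Or.inl (Or.inl hg), hx⟩
        · exact ⟨Or.inl (Or.inr hg), hx⟩
        · simp only [Set.mem_singleton_iff] at hg
          subst hg
          exact ⟨Or.inr rfl, hE⟩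
      · rcases hp with (⟨hg, hx⟩ | ⟨hg, hx⟩) | hg
        · exact ⟨Or.inl (Or.inl hg), hx⟩
        · exact ⟨Or.inl (Or.inr hg), hx⟩
        · simp at hg
  have hdisj1 : Disjoint (vset Kapp t m) (vset Kapp t n) := by
    rw [Set.disjoint_left]
    rintro p hpm hpn
    obtain ⟨a1, a2, a3⟩ := gaps_bound hpm.1
    obtain ⟨b1, b2, b3⟩ := gaps_bound hpn.1
    omega
  have hdisj2 : Disjoint (vset Kapp t m ∪ vset Kapp t n)
      (if ∃ x ≤ mu m, x ∈ Kapp t ∧ x ∉ Kapp (lam n) then {((mu m, lam n) : ℕ × ℕ)} else ∅) := by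
    split_ifs
    · rw [Set.disjoint_right]
      rintro p hp
      simp only [Set.mem_singleton_iff] at hp
      subst hp
      rintro (hc | hc)
      · obtain ⟨a1, a2, a3⟩ := gaps_bound hc.1; simp at a3; omega
      · obtain ⟨a1, a2, a3⟩ := gaps_bound hc.1; simp at a1; omega
    · exact Set.disjoint_empty _
  have hfin : Set.Finite (if ∃ x ≤ mu m, x ∈ Kapp t ∧ x ∉ Kapp (lam n) then {((mu m, lam n) : ℕ × ℕ)} else ∅) := by
    split_ifs
    · exact Set.finite_singleton _
    · exact Set.finite_empty
  rw [vcount, hsplit,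
    Set.ncard_union_eq hdisj2 ((vset_finite _ _ _).union (vset_finite _ _ _)) hfin,
    Set.ncard_union_eq hdisj1 (vset_finite _ _ _) (vset_finite _ _ _)]
  congr 1
  split_ifs
  · exact Set.ncard_singleton _
  · exact Set.ncard_empty _

lemma apart_sum {X : Set ℕ} (hap : ApartSet X) (F : Finset ℕ) (hF : ↑F ⊆ X) :
    ∀ hne : F.Nonempty, 0 < ∑ x ∈ F, x ∧ lam (∑ x ∈ F, x) = lam (F.min' hne) ∧
      mu (∑ x ∈ F, x) = mu (F.max' hne) := by
  induction F using Finset.induction_on_max with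
  | empty => rintro ⟨y, hy⟩; simp at hy
  | insert M G hMG ih =>
    intro hne
    rcases G.eq_empty_or_nonempty with rfl | hGne
    · simp [Finset.min'_singleton, Finset.max'_singleton]
      exact hap.1 M (hF (by simp))
    · have hGX : ↑G ⊆ X := fun y hy => hF (by simp [hy])
      obtain ⟨hpos, hlam, hmu⟩ := ih hGX hGne
      have hMX : M ∈ X := hF (by simp)
      have hM0 : 0 < M := hap.1 M hMX
      have hmaxG : G.max' hGne ∈ X := hGX (G.max'_mem hGne)
      have hlt : G.max' hGne < M := hMG _ (G.max'_mem hGne)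
      have hapMG : mu (∑ x ∈ G, x) < lam M := by
        rw [hmu]; exact hap.2 _ hmaxG _ hMX hlt
      have hnotmem : M ∉ G := fun hc => absurd (hMG M hc) (lt_irrefl M)
      have hsum : ∑ x ∈ insert M G, x = ∑ x ∈ G, x + M := by
        rw [Finset.sum_insert hnotmem]; ring
      have hmin : (insert M G).min' hne = G.min' hGne := by
        apply le_antisymm
        · exact Finset.min'_le _ _ (by simp [Finset.min'_mem _ hGne])
        · apply Finset.le_min'
          intro y hy
          simp only [Finset.mem_insert] at hy
          rcases hy with rfl | hy
          · exact le_of_lt (lt_of_le_of_lt (Finset.min'_le _ _ (G.max'_mem hGne)) hlt)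
          · exact Finset.min'_le _ _ hy
      have hmax : (insert M G).max' hne = M := by
        apply le_antisymm
        · apply Finset.max'_le
          intro y hy
          simp only [Finset.mem_insert] at hy
          rcases hy with rfl | hy
          · exact le_refl _
          · exact le_of_lt (hMG _ hy)
        · exact Finset.le_max' _ _ (by simp)
      refine ⟨by rw [hsum]; omega, ?_, ?_⟩
      · rw [hsum, lam_add_apart hpos hM0 hapMG, hlam, hmin]
      · rw [hsum, mu_add_apart hpos hM0 hapMG, hmax]

lemma exists_fresh {H : Set ℕ} (hinf : H.Infinite) (hap : ApartSet H)
    (D : Finset ℕ) (S j : ℕ) :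
    ∃ F : Finset ℕ, ↑F ⊆ H ∧ F.card = j ∧ (∀ d ∈ D, ∀ y ∈ F, d < y) ∧
      (∀ hne : F.Nonempty, 0 < ∑ x ∈ F, x ∧ S ≤ lam (∑ x ∈ F, x)) := by
  obtain ⟨p, hpH, hp⟩ := hinf.exists_gt (2 ^ S + ∑ d ∈ D, d)
  have hPpos : 0 < 2 ^ S := Nat.two_pow_pos S
  set P := 2 ^ S with hP
  have hinf2 : (H \ Set.Iic p).Infinite := hinf.diff (Set.finite_Iic p)
  obtain ⟨F, hFsub, hFcard⟩ := hinf2.exists_subset_card_eq j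
  have hFH : ↑F ⊆ H := fun y hy => (hFsub hy).1
  have hFgt : ∀ y ∈ F, p < y := by
    intro y hy
    have := (hFsub hy).2
    simpa [Set.mem_Iic] using this
  have hp2S : P ≤ p := by omega
  have hpos : 0 < p := by omega
  have hmup : S ≤ mu p := (Nat.le_log_iff_pow_le one_lt_two hpos.ne').2 (hP ▸ hp2S)
  refine ⟨F, hFH, hFcard, ?_, ?_⟩
  · intro d hd y hy
    have hdsum : d ≤ ∑ x ∈ D, x := Finset.single_le_sum (fun i _ => Nat.zero_le i) hd
    have := hFgt y hy
    omega
  · intro hne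
    obtain ⟨hpos', hlam, _⟩ := apart_sum hap F hFH hne
    refine ⟨hpos', ?_⟩
    rw [hlam]
    have hminF : F.min' hne ∈ F := F.min'_mem hne
    have h1 : mu p < lam (F.min' hne) :=
      hap.2 _ hpH _ (hFH hminF) (hFgt _ hminF)
    omega

lemma exists_settle (K : Set ℕ) (Kapp : ℕ → Set ℕ) (hK : K = ⋃ s, Kapp s)
    (hmono' : Monotone Kapp) (B : ℕ) : ∃ s, ∀ y ≤ B, y ∈ K → y ∈ Kapp s := by
  induction B with
  | zero =>
    by_cases h0 : 0 ∈ K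
    · obtain ⟨s, hs⟩ := Set.mem_iUnion.1 (hK ▸ h0)
      exact ⟨s, fun y hy hyK => by interval_cases y; exact hs⟩
    · exact ⟨0, fun y hy hyK => absurd (Nat.le_zero.1 hy ▸ hyK) h0⟩
  | succ B ih =>
    obtain ⟨s, hs⟩ := ih
    by_cases h0 : B + 1 ∈ K
    · obtain ⟨t, ht⟩ := Set.mem_iUnion.1 (hK ▸ h0)
      refine ⟨max s t, fun y hy hyK => ?_⟩
      rcases Nat.lt_succ_iff_lt_or_eq.1 (Nat.lt_succ_of_le hy) with h | rfl
      · exact hmono' (le_max_left s t) (hs y (by omega) hyK)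
      · exact hmono' (le_max_right s t) ht
    · refine ⟨s, fun y hy hyK => ?_⟩
      rcases Nat.lt_succ_iff_lt_or_eq.1 (Nat.lt_succ_of_le hy) with h | rfl
      · exact hs y (by omega) hyK
      · exact absurd hyK h0

theorem approximation_settles_on_solution (K : Set ℕ) (Kapp : ℕ → Set ℕ)
    (hmono : ∀ s, Kapp s ⊆ Kapp (s + 1)) (hK : K = ⋃ s, Kapp s)
    (c : ℕ → Fin 2) (hc : ∀ n, c n = (open Fin.NatCast in (VSG Kapp n : Fin 2)))
    (H : Set ℕ) (hinf : H.Infinite) (hap : ApartSet H)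
    (a b : ℕ) (ha : 0 < a) (hb : 0 < b)
    (hmc : MonoChr c (FSin {a, b, a + b, a + 2 * b} H)) :
    ∀ m ∈ FSeq a H, ∀ n ∈ FSeq b H, mu m < lam n →
      ∀ x ≤ mu m, (x ∈ K ↔ x ∈ Kapp (lam n)) := by
  intro m hm n hn hmn x hx
  have hmono' : Monotone Kapp := monotone_nat_of_le_succ hmono
  have hKsub : ∀ s, Kapp s ⊆ K := fun s y hy => hK ▸ Set.mem_iUnion.2 ⟨s, hy⟩
  have hVSG : ∀ k, VSG Kapp k = vcount Kapp (mu k) k := fun k => rfl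
  refine ⟨fun hxK => ?_, fun h => hKsub _ h⟩
  by_contra hxapp
  obtain ⟨Fm, hFmH, hFma, hFmsum⟩ := hm
  obtain ⟨Fn, hFnH, hFnb, hFnsum⟩ := hn
  have hFmne : Fm.Nonempty := Finset.card_pos.1 (by rw [hFma]; exact ha)
  have hFnne : Fn.Nonempty := Finset.card_pos.1 (by rw [hFnb]; exact hb)
  have hmprop := apart_sum hap Fm hFmH hFmne
  rw [hFmsum] at hmprop
  obtain ⟨hm0, hlamm, hmum⟩ := hmprop
  have hnprop := apart_sum hap Fn hFnH hFnne
  rw [hFnsum] at hnprop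
  obtain ⟨hn0, hlamn, hmun⟩ := hnprop
  have hlmn : lam n ≤ mu n := lam_le_mu hn0
  have hmmn : mu m ≤ mu n := by omega
  -- ordering between elements of Fm and Fn
  have hlamny : ∀ y ∈ Fn, lam n ≤ lam y := by
    intro y hy
    rcases eq_or_lt_of_le (Fn.min'_le y hy) with he | hlt
    · rw [hlamn, he]
    · have h1 := hap.2 _ (hFnH (Fn.min'_mem hFnne)) _ (hFnH hy) hlt
      have h2 : lam (Fn.min' hFnne) ≤ mu (Fn.min' hFnne) :=
        lam_le_mu (hap.1 _ (hFnH (Fn.min'_mem hFnne)))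
      omega
  have hord : ∀ z ∈ Fm, ∀ y ∈ Fn, z < y := by
    intro z hz y hy
    have hz0 : 0 < z := hap.1 z (hFmH hz)
    have hy0 : 0 < y := hap.1 y (hFnH hy)
    have hzle : z ≤ m := by
      rw [← hFmsum]
      simpa using Finset.single_le_sum (f := fun i => i) (fun i _ => Nat.zero_le i) hz
    have hmuz : mu z ≤ mu m := Nat.log_mono_right hzle
    have h4 := hlamny y hy
    have h5 := lam_le_mu hy0
    exact mu_lt_imp_lt hz0 hy0 (by omega)
  have hdisj_of : ∀ (A B : Finset ℕ), (∀ d ∈ A, ∀ y ∈ B, d < y) → Disjoint A B :=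
    fun A B h => Finset.disjoint_left.2 fun {z} hz hy => absurd (h z hz z hy) (lt_irrefl z)
  have hdisjmn : Disjoint Fm Fn := hdisj_of _ _ hord
  -- stages
  obtain ⟨s1, hs1⟩ := exists_settle K Kapp hK hmono' (mu n)
  obtain ⟨sx, hsx⟩ : ∃ s, x ∈ Kapp s := Set.mem_iUnion.1 (hK ▸ hxK)
  -- first fresh set
  obtain ⟨F1, hF1H, hF1card, hF1gt, hF1prop⟩ :=
    exists_fresh hinf hap (Fm ∪ Fn) (s1 + sx + mu n + 1) b
  have hF1ne : F1.Nonempty := Finset.card_pos.1 (by rw [hF1card]; exact hb)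
  obtain ⟨hn10, hlamn1⟩ := hF1prop hF1ne
  -- second fresh sets
  obtain ⟨F2, hF2H, hF2card, hF2gt, hF2prop⟩ :=
    exists_fresh hinf hap (Fm ∪ Fn) (s1 + mu n + 1) a
  have hF2ne : F2.Nonempty := Finset.card_pos.1 (by rw [hF2card]; exact ha)
  obtain ⟨hm20, hlamm2⟩ := hF2prop hF2ne
  obtain ⟨s3, hs3⟩ := exists_settle K Kapp hK hmono' (mu (∑ x ∈ F2, x))
  obtain ⟨F3, hF3H, hF3card, hF3gt, hF3prop⟩ :=
    exists_fresh hinf hap ((Fm ∪ Fn) ∪ F2) (s1 + s3 + mu (∑ x ∈ F2, x) + 1) b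
  have hF3ne : F3.Nonempty := Finset.card_pos.1 (by rw [hF3card]; exact hb)
  obtain ⟨hn20, hlamn3⟩ := hF3prop hF3ne
  set n1 := ∑ x ∈ F1, x with hn1def
  set m2 := ∑ x ∈ F2, x with hm2def
  set n2 := ∑ x ∈ F3, x with hn2def
  have hl1 : lam n1 ≤ mu n1 := lam_le_mu hn10
  have hl2 : lam m2 ≤ mu m2 := lam_le_mu hm20
  have hl3 : lam n2 ≤ mu n2 := lam_le_mu hn20
  -- apartness facts
  have hmlt1 : mu m < lam n1 := by omega
  have hnlt1 : mu n < lam n1 := by omega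
  have hnltm2 : mu n < lam m2 := by omega
  have hm2lt3 : mu m2 < lam n2 := by omega
  -- disjointness
  have hd1 : Disjoint (Fm ∪ Fn) F1 := hdisj_of _ _ hF1gt
  have hd2 : Disjoint Fn F2 := hdisj_of _ _ (fun d hd => hF2gt d (Finset.mem_union_right _ hd))
  have hdm1 : Disjoint Fm F1 := hdisj_of _ _ (fun d hd => hF1gt d (Finset.mem_union_left _ hd))
  have hd3 : Disjoint (Fn ∪ F2) F3 := hdisj_of _ _ (fun d hd y hy => by
    rcases Finset.mem_union.1 hd with h | h
    · exact hF3gt d (Finset.mem_union_left _ (Finset.mem_union_right _ h)) y hy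
    · exact hF3gt d (Finset.mem_union_right _ h) y hy)
  have hd23 : Disjoint F2 F3 := hdisj_of _ _ (fun d hd => hF3gt d (Finset.mem_union_right _ hd))
  -- memberships in FSin
  have hmem : ∀ (F : Finset ℕ), ↑F ⊆ H → F.card ∈ ({a, b, a + b, a + 2 * b} : Set ℕ) →
      (∑ x ∈ F, x) ∈ FSin {a, b, a + b, a + 2 * b} H := by
    intro F hFH hj
    exact Set.mem_biUnion hj ⟨F, hFH, rfl, rfl⟩
  have hsubm1 : ↑(Fm ∪ F1) ⊆ H := by
    rw [Finset.coe_union]; exact Set.union_subset hFmH hF1H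
  have hsubmn1 : ↑(Fm ∪ Fn ∪ F1) ⊆ H := by
    rw [Finset.coe_union, Finset.coe_union]
    exact Set.union_subset (Set.union_subset hFmH hFnH) hF1H
  have hsub23 : ↑(F2 ∪ F3) ⊆ H := by
    rw [Finset.coe_union]; exact Set.union_subset hF2H hF3H
  have hsubn23 : ↑(Fn ∪ F2 ∪ F3) ⊆ H := by
    rw [Finset.coe_union, Finset.coe_union]
    exact Set.union_subset (Set.union_subset hFnH hF2H) hF3H
  have hmem1 : n1 ∈ FSin {a, b, a + b, a + 2 * b} H := by
    rw [hn1def]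
    exact hmem F1 hF1H (by rw [hF1card]; simp)
  have hmem5 : m + n1 ∈ FSin {a, b, a + b, a + 2 * b} H := by
    have hs : ∑ x ∈ Fm ∪ F1, x = m + n1 := by
      rw [Finset.sum_union hdm1, hFmsum]
    rw [← hs]
    refine hmem _ hsubm1 ?_
    rw [Finset.card_union_of_disjoint hdm1, hFma, hF1card]
    simp
  have hmem6 : m + n + n1 ∈ FSin {a, b, a + b, a + 2 * b} H := by
    have hs : ∑ x ∈ Fm ∪ Fn ∪ F1, x = m + n + n1 := by
      rw [Finset.sum_union hd1, Finset.sum_union hdisjmn, hFmsum, hFnsum]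
    rw [← hs]
    refine hmem _ hsubmn1 ?_
    have : (Fm ∪ Fn ∪ F1).card = a + 2 * b := by
      rw [Finset.card_union_of_disjoint hd1, Finset.card_union_of_disjoint hdisjmn,
        hFma, hFnb, hF1card]
      ring
    rw [this]
    simp
  have hmem8 : n2 ∈ FSin {a, b, a + b, a + 2 * b} H := by
    rw [hn2def]
    exact hmem F3 hF3H (by rw [hF3card]; simp)
  have hmem9 : m2 + n2 ∈ FSin {a, b, a + b, a + 2 * b} H := by
    have hs : ∑ x ∈ F2 ∪ F3, x = m2 + n2 := by
      rw [Finset.sum_union hd23]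
    rw [← hs]
    refine hmem _ hsub23 ?_
    rw [Finset.card_union_of_disjoint hd23, hF2card, hF3card]
    simp
  have hmem10 : n + m2 + n2 ∈ FSin {a, b, a + b, a + 2 * b} H := by
    have hs : ∑ x ∈ Fn ∪ F2 ∪ F3, x = n + m2 + n2 := by
      rw [Finset.sum_union hd3, Finset.sum_union hd2, hFnsum]
    rw [← hs]
    refine hmem _ hsubn23 ?_
    have : (Fn ∪ F2 ∪ F3).card = a + 2 * b := by
      rw [Finset.card_union_of_disjoint hd3, Finset.card_union_of_disjoint hd2,
        hFnb, hF2card, hF3card]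
      ring
    rw [this]
    simp
  -- VSG computations
  have hmu_mn : mu (m + n) = mu n := mu_add_apart hm0 hn0 hmn
  have hmu_mn1 : mu (m + n1) = mu n1 := mu_add_apart hm0 hn10 hmlt1
  have hmu_mnn1 : mu (m + n + n1) = mu n1 :=
    mu_add_apart (by omega) hn10 (by rw [hmu_mn]; exact hnlt1)
  have hmu_nm2 : mu (n + m2) = mu m2 := mu_add_apart hn0 hm20 hnltm2
  have hmu_nm2n2 : mu (n + m2 + n2) = mu n2 :=
    mu_add_apart (by omega) hn20 (by rw [hmu_nm2]; exact hm2lt3)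
  have hmu_m2n2 : mu (m2 + n2) = mu n2 := mu_add_apart hm20 hn20 hm2lt3
  -- negative side conditions
  have hneg1 : ¬∃ y ≤ mu m, y ∈ Kapp (mu n1) ∧ y ∉ Kapp (lam n1) := by
    rintro ⟨y, hy1, hy2, hy3⟩
    exact hy3 (hmono' (by omega : s1 ≤ lam n1) (hs1 y (by omega) (hKsub _ hy2)))
  have hneg2 : ¬∃ y ≤ mu n, y ∈ Kapp (mu n1) ∧ y ∉ Kapp (lam n1) := by
    rintro ⟨y, hy1, hy2, hy3⟩
    exact hy3 (hmono' (by omega : s1 ≤ lam n1) (hs1 y hy1 (hKsub _ hy2)))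
  have hneg3 : ¬∃ y ≤ mu n, y ∈ Kapp (mu n2) ∧ y ∉ Kapp (lam m2) := by
    rintro ⟨y, hy1, hy2, hy3⟩
    exact hy3 (hmono' (by omega : s1 ≤ lam m2) (hs1 y hy1 (hKsub _ hy2)))
  have hneg4 : ¬∃ y ≤ mu m2, y ∈ Kapp (mu n2) ∧ y ∉ Kapp (lam n2) := by
    rintro ⟨y, hy1, hy2, hy3⟩
    exact hy3 (hmono' (by omega : s3 ≤ lam n2) (hs3 y hy1 (hKsub _ hy2)))
  -- positive side condition
  have hpos1 : ∃ y ≤ mu m, y ∈ Kapp (mu n1) ∧ y ∉ Kapp (lam n) :=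
    ⟨x, hx, hmono' (by omega : sx ≤ mu n1) hsx, hxapp⟩
  -- natural number identities for VSG
  have hV5 : VSG Kapp (m + n1) = vcount Kapp (mu n1) m + vcount Kapp (mu n1) n1 := by
    rw [hVSG _, hmu_mn1, vcount_add Kapp hm0 hn10 hmlt1, if_neg hneg1, add_zero]
  have hV6 : VSG Kapp (m + n + n1) =
      vcount Kapp (mu n1) m + vcount Kapp (mu n1) n + 1 + vcount Kapp (mu n1) n1 := by
    rw [hVSG _, hmu_mnn1, vcount_add Kapp (by omega : 0 < m + n) hn10
      (by rw [hmu_mn]; exact hnlt1), hmu_mn, if_neg hneg2, add_zero,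
      vcount_add Kapp hm0 hn0 hmn, if_pos hpos1]
  have hV9 : VSG Kapp (m2 + n2) = vcount Kapp (mu n2) m2 + vcount Kapp (mu n2) n2 := by
    rw [hVSG _, hmu_m2n2, vcount_add Kapp hm20 hn20 hm2lt3, if_neg hneg4, add_zero]
  have hV10 : VSG Kapp (n + m2 + n2) =
      vcount Kapp (mu n2) n + vcount Kapp (mu n2) m2 + vcount Kapp (mu n2) n2 := by
    rw [hVSG _, hmu_nm2n2, vcount_add Kapp (by omega : 0 < n + m2) hn20
      (by rw [hmu_nm2]; exact hm2lt3), hmu_nm2, if_neg hneg4, add_zero,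
      vcount_add Kapp hn0 hm20 hnltm2, if_neg hneg3, add_zero]
  -- stability of the count for n
  have hRB : vcount Kapp (mu n2) n = vcount Kapp (mu n1) n := by
    have hset : vset Kapp (mu n2) n = vset Kapp (mu n1) n := by
      ext p
      simp only [vset, Set.mem_setOf_eq]
      constructor
      · rintro ⟨hg, y, hy1, hy2, hy3⟩
        have hb := gaps_bound hg
        refine ⟨hg, y, hy1, ?_, hy3⟩
        exact hmono' (by omega : s1 ≤ mu n1) (hs1 y (by omega) (hKsub _ hy2))
      · rintro ⟨hg, y, hy1, hy2, hy3⟩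
        have hb := gaps_bound hg
        refine ⟨hg, y, hy1, ?_, hy3⟩
        exact hmono' (by omega : s1 ≤ mu n2) (hs1 y (by omega) (hKsub _ hy2))
    rw [vcount, vcount, hset]
  -- color equations
  have hcol : ∀ u ∈ FSin {a, b, a + b, a + 2 * b} H,
      (open Fin.NatCast in ((VSG Kapp u : Fin 2) = (VSG Kapp n1 : Fin 2))) := by
    intro u hu
    rw [← hc, ← hc]
    exact hmc u hu n1 hmem1
  have e3 : (open Fin.NatCast in (((vcount Kapp (mu n1) n1 : ℕ) : Fin 2) = (VSG Kapp n1 : Fin 2))) := by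
    rw [← hVSG _]
  have e5 := hcol _ hmem5
  have e6 := hcol _ hmem6
  have e9 := hcol _ hmem9
  have e10 := hcol _ hmem10
  rw [hV5] at e5
  rw [hV6] at e6
  rw [hV9] at e9
  rw [hV10] at e10
  have erb : (open Fin.NatCast in (((vcount Kapp (mu n2) n : ℕ) : Fin 2) = (vcount Kapp (mu n1) n : Fin 2))) := by
    rw [hRB]
  open Fin.CommRing in push_cast at e5 e6 e9 e10
  have hone : (1 : Fin 2) = 0 := by
    open Fin.CommRing in linear_combination e6 - e5 - e10 + e9 + erb
  exact absurd hone (by decide)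
end

section
/- Fix a positive integer a. Suppose that for every coloring c : ℕ → Fin 2 there exists an infinite apart set H ⊆ ℕ such that FS^{{a, 2a, 3a}}(H) is monochromatic under c. Then for every coloring c : ℕ → Fin 2 there exists an infinite set H' ⊆ ℕ of positive integers such that FS^{≤3}(H') (all sums of at most 3 distinct elements of H') is monochromatic under c. -/
/-!
Group the elements `e 0 < e 1 < ⋯` of `H` into consecutive blocks of `a` elements and let
`H'` consist of the block sums. A sum of `j` distinct block sums is a sum of `j * a` distinct
elements of `H`, so `FS^{≤3}(H') ⊆ FS^{{a, 2a, 3a}}(H)`, and `H'` inherits monochromaticity.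
-/

open Finset

lemma MonoChr.subset {r : ℕ} {c : ℕ → Fin r} {S T : Set ℕ} (hT : MonoChr c T) (hST : S ⊆ T) :
    MonoChr c S :=
  fun x hx y hy => hT x (hST hx) y (hST hy)

lemma injOn_mul_add_of_lt (a : ℕ) :
    Set.InjOn (fun p : ℕ × ℕ => a * p.1 + p.2) {p | p.2 < a} := by
  rintro ⟨i, r⟩ (hr : r < a) ⟨i', r'⟩ (hr' : r' < a) (h : a * i + r = a * i' + r')
  have ha : 0 < a := by omega
  have hdiv := congrArg (· / a) h
  have hmod := congrArg (· % a) h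
  simp only [Nat.mul_add_div ha, Nat.div_eq_of_lt hr, Nat.div_eq_of_lt hr', Nat.mul_add_mod,
    Nat.mod_eq_of_lt hr, Nat.mod_eq_of_lt hr', add_zero] at hdiv hmod
  rw [hdiv, hmod]

def blockSum (e : ℕ → ℕ) (a i : ℕ) : ℕ :=
  ∑ r ∈ range a, e (a * i + r)

section blockSum

variable {e : ℕ → ℕ} {a : ℕ}

lemma blockSum_strictMono (he : StrictMono e) (ha : 0 < a) : StrictMono (blockSum e a) := by
  intro i k hik
  have : a * i + a ≤ a * k := by nlinarith
  exact sum_lt_sum_of_nonempty ⟨0, mem_range.mpr ha⟩ fun r hr =>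
    he (by have := mem_range.mp hr; omega)

lemma blockSum_pos (he : ∀ n, 0 < e n) (ha : 0 < a) (i : ℕ) : 0 < blockSum e a i :=
  sum_pos (fun _ _ => he _) ⟨0, mem_range.mpr ha⟩

lemma FSeq_range_blockSum_subset (he : StrictMono e) (ha : 0 < a) (j : ℕ) :
    FSeq j (Set.range (blockSum e a)) ⊆ FSeq (j * a) (Set.range e) := by
  rintro n ⟨F, hF, rfl, rfl⟩
  rw [← Set.image_univ] at hF
  obtain ⟨I, -, rfl⟩ := subset_set_image_iff.mp hF
  have hinj : Set.InjOn (fun p : ℕ × ℕ => e (a * p.1 + p.2)) ↑(I ×ˢ range a) :=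
    he.injective.comp_injOn <| (injOn_mul_add_of_lt a).mono fun p hp =>
      mem_range.mp (mem_product.mp hp).2
  refine ⟨(I ×ˢ range a).image fun p => e (a * p.1 + p.2), ?_, ?_, ?_⟩
  · simp only [coe_image]
    exact Set.image_subset_iff.mpr fun p _ => ⟨_, rfl⟩
  · rw [card_image_of_injOn hinj, card_product, card_range,
      card_image_of_injective _ (blockSum_strictMono he ha).injective]
  · rw [sum_image hinj, sum_product,
      sum_image fun _ _ _ _ h => (blockSum_strictMono he ha).injective h]
    rfl

lemma FSin_range_blockSum_subset (he : StrictMono e) (ha : 0 < a) (A : Set ℕ) :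
    FSin A (Set.range (blockSum e a)) ⊆ FSin ((· * a) '' A) (Set.range e) := by
  simp only [FSin, Set.biUnion_image]
  exact Set.biUnion_mono subset_rfl fun j _ => FSeq_range_blockSum_subset he ha j

end blockSum

theorem ht_a_2a_3a_implies_ht_le_three (a : ℕ) (ha : 0 < a)
    (hyp : ∀ c : ℕ → Fin 2, ∃ H : Set ℕ, H.Infinite ∧ ApartSet H ∧
      MonoChr c (FSin {a, 2 * a, 3 * a} H)) :
    ∀ c : ℕ → Fin 2, ∃ H : Set ℕ, H.Infinite ∧ (∀ x ∈ H, 0 < x) ∧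
      MonoChr c (FSin {1, 2, 3} H) := by
  intro c
  obtain ⟨H, hinf, ⟨hpos, -⟩, hmono⟩ := hyp c
  set e := Nat.nth (· ∈ H)
  have he : StrictMono e := Nat.nth_strictMono hinf
  have hrange : Set.range e = H := Nat.range_nth_of_infinite hinf
  have hsub := FSin_range_blockSum_subset he ha {1, 2, 3}
  simp only [Set.image_insert_eq, Set.image_singleton, one_mul, hrange] at hsub
  refine ⟨Set.range (blockSum e a),
    Set.infinite_range_of_injective (blockSum_strictMono he ha).injective, ?_,
    hmono.subset hsub⟩
  rintro _ ⟨i, rfl⟩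
  exact blockSum_pos (fun n => hpos _ (hrange ▸ Set.mem_range_self n)) ha i
end
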